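/- Let w : S → [0,∞) be a measurable function on a finite measure space S with measure μ(S) = m, and suppose there are constants A ≥ 1 such that ‖w‖_{L^j(S)} ≤ A·j for every integer j ≥ 1. Then, with s₀ := (2Ae)^{-1}, it holds ∫_S exp(s₀ w) dμ ≤ 2 + m. -/

import Mathlib

open MeasureTheory
open scoped Nat

/-! If the `L^j` norms of `w ≥ 0` grow at most like `A j`, then `∫ w^j ≤ (A j)^j`, and since
`j^j / j! ≤ e^j` the `j`-th term `s₀^j / j! ∫ w^j` of the expansion of `∫ exp (s₀ w)` is at
most `(s₀ A e)^j = 2^{-j}`. Summing the geometric series, the terms with `j ≥ 1` contribute at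
most `1`, and the term `j = 0` contributes `μ(S)`. -/

theorem summable_of_succ_le_geometric {c : ℕ → ℝ} {r : ℝ} (hc : ∀ j, 0 ≤ c j)
    (hcr : ∀ j, c (j + 1) ≤ r ^ (j + 1)) (hr0 : 0 ≤ r) (hr1 : r < 1) : Summable c :=
  (summable_nat_add_iff 1).mp <| Summable.of_nonneg_of_le (fun _ => hc _) hcr <|
    (summable_nat_add_iff 1).mpr (summable_geometric_of_lt_one hr0 hr1)

theorem tsum_le_of_succ_le_geometric {c : ℕ → ℝ} {r : ℝ} (hc : ∀ j, 0 ≤ c j)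
    (hcr : ∀ j, c (j + 1) ≤ r ^ (j + 1)) (hr0 : 0 ≤ r) (hr1 : r < 1) :
    ∑' j, c j ≤ c 0 + r * (1 - r)⁻¹ := by
  have hgeom : HasSum (fun j => r ^ (j + 1)) (r * (1 - r)⁻¹) := by
    simpa only [pow_succ'] using (hasSum_geometric_of_lt_one hr0 hr1).mul_left r
  have hsum := summable_of_succ_le_geometric hc hcr hr0 hr1
  rw [hsum.tsum_eq_zero_add, ← hgeom.tsum_eq]
  exact add_le_add_right
    (((summable_nat_add_iff 1).mpr hsum).tsum_le_tsum hcr hgeom.summable) _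

theorem Real.mul_natCast_pow_div_factorial_le {a : ℝ} (ha : 0 ≤ a) (j : ℕ) :
    (a * j) ^ j / j ! ≤ (a * Real.exp 1) ^ j := by
  rw [mul_pow, mul_pow, mul_div_assoc, Real.exp_one_pow]
  gcongr
  exact Real.pow_div_factorial_le_exp _ (Nat.cast_nonneg j) j

theorem Real.le_pow_of_rpow_inv_natCast_le {x y : ℝ} {n : ℕ} (hx : 0 ≤ x) (hn : n ≠ 0)
    (h : x ^ (n⁻¹ : ℝ) ≤ y) : x ≤ y ^ n := by
  simpa only [Real.rpow_inv_natCast_pow hx hn] using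
    pow_le_pow_left₀ (Real.rpow_nonneg hx _) h n

section

variable {S : Type*} [MeasurableSpace S] {μ : Measure S} {w : S → ℝ}

theorem hasSum_integral_exp_mul (hw0 : ∀ x, 0 ≤ w x)
    (hint : ∀ j : ℕ, Integrable (fun x => w x ^ j) μ) {s : ℝ} (hs : 0 ≤ s)
    (hsum : Summable fun j : ℕ => s ^ j / j ! * ∫ x, w x ^ j ∂μ) :
    HasSum (fun j : ℕ => s ^ j / j ! * ∫ x, w x ^ j ∂μ) (∫ x, Real.exp (s * w x) ∂μ) := by
  have hterm : ∀ j : ℕ,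
      ∫ x, ‖s ^ j / j ! * w x ^ j‖ ∂μ = s ^ j / j ! * ∫ x, w x ^ j ∂μ := fun j => by
    rw [← integral_const_mul]
    exact integral_congr_ae (Filter.Eventually.of_forall fun x =>
      Real.norm_of_nonneg (by have := hw0 x; positivity))
  have hexp : ∀ x, ∑' j : ℕ, s ^ j / j ! * w x ^ j = Real.exp (s * w x) := fun x => by
    rw [Real.exp_eq_exp_ℝ, ← (NormedSpace.expSeries_div_hasSum_exp (s * w x)).tsum_eq]
    simp only [mul_pow, div_mul_eq_mul_div]
  simpa only [integral_const_mul, hexp] using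
    hasSum_integral_of_summable_integral_norm (fun j => (hint j).const_mul (s ^ j / j !))
      (by simpa only [hterm] using hsum)

theorem div_factorial_mul_integral_pow_le (hw0 : ∀ x, 0 ≤ w x) {j : ℕ} (hj : j ≠ 0)
    {A s : ℝ} (hA : 0 ≤ A) (hs : 0 ≤ s) (hLj : (∫ x, w x ^ j ∂μ) ^ (j⁻¹ : ℝ) ≤ A * j) :
    s ^ j / j ! * ∫ x, w x ^ j ∂μ ≤ (s * A * Real.exp 1) ^ j :=
  calc s ^ j / j ! * ∫ x, w x ^ j ∂μ
      ≤ s ^ j / j ! * (A * j) ^ j := by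
        gcongr
        exact Real.le_pow_of_rpow_inv_natCast_le
          (integral_nonneg fun x => pow_nonneg (hw0 x) j) hj hLj
    _ = (s * A * j) ^ j / j ! := by ring
    _ ≤ (s * A * Real.exp 1) ^ j := Real.mul_natCast_pow_div_factorial_le (by positivity) j

end

theorem stmt_3_general {S : Type*} [MeasurableSpace S] (μ : Measure S)
    (w : S → ℝ) (hw0 : ∀ x, 0 ≤ w x) (A : ℝ) (hA : 1 ≤ A)
    (hint : ∀ j : ℕ, Integrable (fun x => w x ^ (j : ℝ)) μ)
    (hLj : ∀ j : ℕ, 1 ≤ j → (∫ x, w x ^ (j : ℝ) ∂μ) ^ ((j : ℝ))⁻¹ ≤ A * j) :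
    ∫ x, Real.exp ((2 * A * Real.exp 1)⁻¹ * w x) ∂μ ≤ 2 + (μ Set.univ).toReal := by
  simp only [Real.rpow_natCast] at hint hLj
  set s := (2 * A * Real.exp 1)⁻¹
  set c : ℕ → ℝ := fun j => s ^ j / j ! * ∫ x, w x ^ j ∂μ
  have hs : 0 ≤ s := by positivity
  have hsAe : s * A * Real.exp 1 = 1 / 2 := by simp only [s]; field_simp
  have hc : ∀ j, 0 ≤ c j := fun j =>
    mul_nonneg (by positivity) (integral_nonneg fun x => pow_nonneg (hw0 x) j)
  have hcr : ∀ j, c (j + 1) ≤ (1 / 2) ^ (j + 1) := fun j =>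
    hsAe ▸ div_factorial_mul_integral_pow_le hw0 j.succ_ne_zero (by linarith) hs
      (hLj _ (Nat.le_add_left 1 j))
  have hc0 : c 0 = (μ Set.univ).toReal := by simp [c, Measure.real]
  rw [← (hasSum_integral_exp_mul hw0 hint hs
    (summable_of_succ_le_geometric hc hcr (by norm_num) (by norm_num))).tsum_eq]
  calc ∑' j, c j ≤ c 0 + 1 / 2 * (1 - 1 / 2)⁻¹ :=
        tsum_le_of_succ_le_geometric hc hcr (by norm_num) (by norm_num)
    _ = (μ Set.univ).toReal + 1 := by rw [hc0]; norm_num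
    _ ≤ 2 + (μ Set.univ).toReal := by linarith

theorem stmt_3 {S : Type*} [MeasurableSpace S] (μ : Measure S) [IsFiniteMeasure μ]
    (w : S → ℝ) (hw : Measurable w) (hw0 : ∀ x, 0 ≤ w x) (A : ℝ) (hA : 1 ≤ A)
    (hint : ∀ j : ℕ, Integrable (fun x => w x ^ (j : ℝ)) μ)
    (hLj : ∀ j : ℕ, 1 ≤ j → (∫ x, w x ^ (j : ℝ) ∂μ) ^ ((j : ℝ))⁻¹ ≤ A * j)
    (hexp : Integrable (fun x => Real.exp ((2 * A * Real.exp 1)⁻¹ * w x)) μ) :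
    ∫ x, Real.exp ((2 * A * Real.exp 1)⁻¹ * w x) ∂μ ≤ 2 + (μ Set.univ).toReal :=
  stmt_3_general μ w hw0 A hA hint hLj
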